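/- arXiv:2311.07181 — 3 statements merged into one kernel-verified Lean document; each statement's English description precedes it below -/
import Mathlib

section
/- The map sending a lonely singles partition π = {A_1, ..., A_k} of [n] (where 1 ∈ A_1) to the partition {A_1 ∪ {n+1}, A_2, ..., A_k} of [n+1] is a well-defined injective map from the set of lonely singles partitions of [n] to the set of lonely singles partitions of [n+1]. -/
/-- `π` is a partition of `[n] = {1,…,n}`: blocks are nonempty, pairwise disjoint,
and their union is exactly `{1,…,n}`. -/
def IsPartitionOf (n : ℕ) (π : Finset (Finset ℕ)) : Prop :=
  (∀ A ∈ π, A.Nonempty) ∧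
  (∀ A ∈ π, ∀ B ∈ π, A ≠ B → Disjoint A B) ∧
  (∀ x : ℕ, x ∈ Finset.Icc 1 n ↔ ∃ A ∈ π, x ∈ A)

/-- `π` is crossing: two distinct blocks contain `a < c < b < d` with `a,b` in one and
`c,d` in the other. -/
def Crossing (π : Finset (Finset ℕ)) : Prop :=
  ∃ A ∈ π, ∃ B ∈ π, A ≠ B ∧ ∃ a ∈ A, ∃ b ∈ A, ∃ c ∈ B, ∃ d ∈ B,
    a < c ∧ c < b ∧ b < d

/-- Noncrossing partition of `[n]`. -/
def IsNCPartition (n : ℕ) (π : Finset (Finset ℕ)) : Prop :=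
  IsPartitionOf n π ∧ ¬ Crossing π

/-- Replace the singleton blocks `{i}` and `{j}` by the block `{i,j}`. -/
def mergeSingles (π : Finset (Finset ℕ)) (i j : ℕ) : Finset (Finset ℕ) :=
  insert {i, j} ((π.erase {i}).erase {j})

/-- A marriageable singles partition of `[n]`. -/
def IsMarriageable (n : ℕ) (π : Finset (Finset ℕ)) : Prop :=
  IsNCPartition n π ∧ ∃ i j : ℕ, i ≠ j ∧ {i} ∈ π ∧ {j} ∈ π ∧
    IsNCPartition n (mergeSingles π i j)

/-- A lonely singles partition of `[n]`. -/
def IsLonely (n : ℕ) (π : Finset (Finset ℕ)) : Prop :=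
  IsNCPartition n π ∧ ¬ IsMarriageable n π

/-- `C n`: the number of noncrossing partitions of `[n]`. -/
noncomputable def Cnum (n : ℕ) : ℕ := Set.ncard {π : Finset (Finset ℕ) | IsNCPartition n π}

/-- `M n`: the number of marriageable singles partitions of `[n]`. -/
noncomputable def Mnum (n : ℕ) : ℕ := Set.ncard {π : Finset (Finset ℕ) | IsMarriageable n π}

/-- `L n`: the number of lonely singles partitions of `[n]`. -/
noncomputable def Lnum (n : ℕ) : ℕ := Set.ncard {π : Finset (Finset ℕ) | IsLonely n π}

/-- `NCcount n m k`: number of noncrossing partitions of `[n]` into `m` blocks with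
exactly `k` singleton blocks. -/
noncomputable def NCcount (n m k : ℕ) : ℕ :=
  Set.ncard {π : Finset (Finset ℕ) | IsNCPartition n π ∧ π.card = m ∧
    (π.filter fun A => A.card = 1).card = k}

/-- Binomial coefficient on integers, `0` when an argument is negative. -/
def zchoose (a b : ℤ) : ℤ := if 0 ≤ a ∧ 0 ≤ b then (a.toNat).choose b.toNat else 0

/-!
Write `π⁺` for the image of `π`. Removing `n + 1` from its blocks gives back `π`, so a crossing of `π⁺`
not using `n + 1` is one of `π`, while a crossing `a < c < b < n + 1` with `1, c` in the block of
`n + 1` gives the crossing `1 < a < c < b` of `π`. The singletons of `π⁺` are exactly the singletons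
`{i}` of `π` with `i ≠ 1`; merging two of them in `π` and adding `n + 1` to the block of `1`
gives the corresponding merge in `π⁺`, so a crossing after the merge in `π` persists in `π⁺`.
Hence `π⁺` is lonely whenever `π` is, and the map is injective.
-/

open Finset

def joinFirst (n : ℕ) (A : Finset ℕ) : Finset ℕ := if 1 ∈ A then insert (n + 1) A else A

section JoinFirst

variable {n x : ℕ} {A : Finset ℕ}

lemma mem_joinFirst_iff : x ∈ joinFirst n A ↔ x ∈ A ∨ (x = n + 1 ∧ 1 ∈ A) := by
  unfold joinFirst
  split_ifs <;> simp [*, or_comm]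

lemma subset_joinFirst (n : ℕ) (A : Finset ℕ) : A ⊆ joinFirst n A :=
  fun _ hx => mem_joinFirst_iff.2 (Or.inl hx)

lemma mem_of_mem_joinFirst (hx : x ∈ joinFirst n A) (hne : x ≠ n + 1) : x ∈ A :=
  (mem_joinFirst_iff.1 hx).resolve_right fun h => hne h.1

lemma joinFirst_of_one_notMem (h : 1 ∉ A) : joinFirst n A = A := if_neg h

lemma erase_joinFirst (h : n + 1 ∉ A) : (joinFirst n A).erase (n + 1) = A := by
  ext x
  by_cases hx : x = n + 1
  · simp [hx, h]
  · simp [hx, mem_joinFirst_iff]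

lemma joinFirst_eq_singleton (h : n + 1 ∉ A) (hA : joinFirst n A = {x}) : A = {x} ∧ x ≠ 1 := by
  by_cases h1 : 1 ∈ A
  · have h1x : 1 = x := mem_singleton.1 (hA ▸ subset_joinFirst n A h1)
    have hnx : n + 1 = x := mem_singleton.1 (hA ▸ mem_joinFirst_iff.2 (Or.inr ⟨rfl, h1⟩))
    exact absurd (by rw [hnx, ← h1x]; exact h1) h
  · rw [joinFirst_of_one_notMem h1] at hA
    exact ⟨hA, fun hx => h1 (by rw [hA, hx]; exact mem_singleton_self 1)⟩

end JoinFirst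

lemma Crossing.of_injOn {π π' : Finset (Finset ℕ)} {f : Finset ℕ → Finset ℕ}
    (hsub : ∀ A ∈ π, A ⊆ f A) (hinj : Set.InjOn f π) (hmaps : Set.MapsTo f π π')
    (h : Crossing π) : Crossing π' := by
  obtain ⟨A, hA, B, hB, hAB, a, ha, b, hb, c, hc, d, hd, hac, hcb, hbd⟩ := h
  exact ⟨f A, hmaps hA, f B, hmaps hB, fun hf => hAB (hinj hA hB hf),
    a, hsub A hA ha, b, hsub A hA hb, c, hsub B hB hc, d, hsub B hB hd, hac, hcb, hbd⟩

lemma mapsTo_mergeSingles_image {π : Finset (Finset ℕ)} {f : Finset ℕ → Finset ℕ} {i j : ℕ}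
    (hinj : Set.InjOn f π) (hi : {i} ∈ π) (hj : {j} ∈ π) (hfi : f {i} = {i})
    (hfj : f {j} = {j}) (hfij : f {i, j} = {i, j}) :
    Set.MapsTo f (mergeSingles π i j) (mergeSingles (π.image f) i j) := by
  intro C hC
  simp only [mergeSingles, coe_insert, coe_erase, Set.mem_insert_iff, Set.mem_sdiff,
    Set.mem_singleton_iff, mem_coe, coe_image, Set.mem_image] at hC ⊢
  rcases hC with rfl | ⟨⟨hC, hCi⟩, hCj⟩
  · exact Or.inl hfij
  · exact Or.inr ⟨⟨⟨C, hC, rfl⟩, fun hf => hCi (hinj hC hi (hf.trans hfi.symm))⟩,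
      fun hf => hCj (hinj hC hj (hf.trans hfj.symm))⟩

namespace IsPartitionOf

variable {n : ℕ} {π : Finset (Finset ℕ)}

lemma one_le_and_le_of_mem (h : IsPartitionOf n π) {A : Finset ℕ} (hA : A ∈ π) {x : ℕ} (hx : x ∈ A) :
    1 ≤ x ∧ x ≤ n :=
  Finset.mem_Icc.1 ((h.2.2 x).2 ⟨A, hA, hx⟩)

lemma succ_notMem (h : IsPartitionOf n π) {A : Finset ℕ} (hA : A ∈ π) : n + 1 ∉ A :=
  fun hx => by have := (h.one_le_and_le_of_mem hA hx).2; omega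

lemma eq_of_mem (h : IsPartitionOf n π) {A B : Finset ℕ} (hA : A ∈ π) (hB : B ∈ π) {x : ℕ}
    (hxA : x ∈ A) (hxB : x ∈ B) : A = B := by
  by_contra hAB
  exact disjoint_left.1 (h.2.1 A hA B hB hAB) hxA hxB

lemma mergeSingles (h : IsPartitionOf n π) {i j : ℕ} (hij : i ≠ j) (hi : {i} ∈ π)
    (hj : {j} ∈ π) : IsPartitionOf n (mergeSingles π i j) := by
  have hmem : ∀ A, A ∈ _root_.mergeSingles π i j ↔ A = {i, j} ∨ (A ≠ {j} ∧ A ≠ {i} ∧ A ∈ π) :=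
    fun A => by simp only [_root_.mergeSingles, mem_insert, mem_erase]
  have hpair : ∀ B ∈ π, B ≠ {j} → B ≠ {i} → Disjoint {i, j} B := fun B hB hBj hBi => by
    simp only [disjoint_insert_left, disjoint_singleton_left]
    exact ⟨fun hiB => hBi (h.eq_of_mem hB hi hiB (mem_singleton_self i)),
      fun hjB => hBj (h.eq_of_mem hB hj hjB (mem_singleton_self j))⟩
  refine ⟨fun A hA => ?_, fun A hA B hB hAB => ?_, fun x => (h.2.2 x).trans ?_⟩
  · rcases (hmem A).1 hA with rfl | ⟨-, -, hA⟩
    · exact insert_nonempty i {j}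
    · exact h.1 A hA
  · rcases (hmem A).1 hA with rfl | ⟨hAj, hAi, hA⟩ <;>
      rcases (hmem B).1 hB with rfl | ⟨hBj, hBi, hB⟩
    · exact absurd rfl hAB
    · exact hpair B hB hBj hBi
    · exact (hpair A hA hAj hAi).symm
    · exact h.2.1 A hA B hB hAB
  · constructor
    · rintro ⟨A, hA, hxA⟩
      by_cases hAi : A = {i}
      · exact ⟨{i, j}, (hmem _).2 (Or.inl rfl), by simp_all⟩
      by_cases hAj : A = {j}
      · exact ⟨{i, j}, (hmem _).2 (Or.inl rfl), by simp_all⟩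
      exact ⟨A, (hmem A).2 (Or.inr ⟨hAj, hAi, hA⟩), hxA⟩
    · rintro ⟨A, hA, hxA⟩
      rcases (hmem A).1 hA with rfl | ⟨-, -, hA⟩
      · rcases mem_insert.1 hxA with rfl | hxj
        · exact ⟨{x}, hi, mem_singleton_self x⟩
        · exact ⟨{j}, hj, hxj⟩
      · exact ⟨A, hA, hxA⟩

lemma injOn_joinFirst (h : IsPartitionOf n π) : Set.InjOn (joinFirst n) π := fun A hA B hB hAB => by
  rw [← erase_joinFirst (h.succ_notMem hA), hAB, erase_joinFirst (h.succ_notMem hB)]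

lemma image_erase_image_joinFirst (h : IsPartitionOf n π) :
    ((π.image (joinFirst n)).image fun A => A.erase (n + 1)) = π := by
  rw [image_image]
  exact (image_congr fun A hA => erase_joinFirst (h.succ_notMem hA)).trans image_id

lemma singleton_mem_of_mem_image_joinFirst (h : IsPartitionOf n π) {x : ℕ}
    (hx : {x} ∈ π.image (joinFirst n)) : {x} ∈ π ∧ x ≠ 1 := by
  obtain ⟨A, hA, hAx⟩ := mem_image.1 hx
  obtain ⟨rfl, hx1⟩ := joinFirst_eq_singleton (h.succ_notMem hA) hAx
  exact ⟨hA, hx1⟩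

lemma image_joinFirst (hn : 1 ≤ n) (h : IsPartitionOf n π) :
    IsPartitionOf (n + 1) (π.image (joinFirst n)) := by
  refine ⟨?_, ?_, fun x => ?_⟩
  · simp only [mem_image, forall_exists_index, and_imp, forall_apply_eq_imp_iff₂]
    exact fun A hA => (h.1 A hA).mono (subset_joinFirst n A)
  · simp only [mem_image, forall_exists_index, and_imp, forall_apply_eq_imp_iff₂]
    intro A hA B hB hAB
    refine disjoint_left.2 fun x hxA hxB => hAB (congrArg (joinFirst n) ?_)
    rcases mem_joinFirst_iff.1 hxA with hxA | ⟨rfl, h1A⟩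
    · have hxB' := mem_of_mem_joinFirst hxB fun hx => h.succ_notMem hA (hx ▸ hxA)
      exact h.eq_of_mem hA hB hxA hxB'
    · exact h.eq_of_mem hA hB h1A ((mem_joinFirst_iff.1 hxB).resolve_left (h.succ_notMem hB)).2
  · simp only [exists_mem_image, mem_joinFirst_iff, Finset.mem_Icc]
    constructor
    · rintro ⟨hx1, hxn⟩
      rcases Nat.lt_or_ge x (n + 1) with hlt | hge
      · obtain ⟨A, hA, hxA⟩ := (h.2.2 x).1 (Finset.mem_Icc.2 ⟨hx1, by omega⟩)
        exact ⟨A, hA, Or.inl hxA⟩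
      · obtain ⟨A, hA, h1A⟩ := (h.2.2 1).1 (Finset.mem_Icc.2 ⟨le_rfl, hn⟩)
        exact ⟨A, hA, Or.inr ⟨by omega, h1A⟩⟩
    · rintro ⟨A, hA, hxA | ⟨rfl, -⟩⟩
      · have := h.one_le_and_le_of_mem hA hxA
        omega
      · omega

end IsPartitionOf

namespace IsNCPartition

variable {n : ℕ} {π : Finset (Finset ℕ)}

lemma image_joinFirst (hn : 1 ≤ n) (h : IsNCPartition n π) :
    IsNCPartition (n + 1) (π.image (joinFirst n)) := by
  refine ⟨h.1.image_joinFirst hn, ?_⟩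
  rintro ⟨A', hA', B', hB', hne, a, ha, b, hb, c, hc, d, hd, hac, hcb, hbd⟩
  obtain ⟨A, hA, rfl⟩ := mem_image.1 hA'
  obtain ⟨B, hB, rfl⟩ := mem_image.1 hB'
  have hAB : A ≠ B := by rintro rfl; exact hne rfl
  have hd_le : d ≤ n + 1 := by
    rcases mem_joinFirst_iff.1 hd with hdB | ⟨rfl, -⟩
    · have := h.1.one_le_and_le_of_mem hB hdB
      omega
    · rfl
  have haA := mem_of_mem_joinFirst ha (by omega)
  have hbA := mem_of_mem_joinFirst hb (by omega)
  have hcB := mem_of_mem_joinFirst hc (by omega)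
  rcases mem_joinFirst_iff.1 hd with hdB | ⟨rfl, h1B⟩
  · exact h.2 ⟨A, hA, B, hB, hAB, a, haA, b, hbA, c, hcB, d, hdB, hac, hcb, hbd⟩
  · have ha1 : 1 < a := by
      have := (h.1.one_le_and_le_of_mem hA haA).1
      have : a ≠ 1 := by rintro rfl; exact hAB (h.1.eq_of_mem hA hB haA h1B)
      omega
    exact h.2 ⟨B, hB, A, hA, hAB.symm, 1, h1B, c, hcB, a, haA, b, hbA, ha1, hac, hcb⟩

lemma isMarriageable_of_image_joinFirst (h : IsNCPartition n π)
    (hm : IsMarriageable (n + 1) (π.image (joinFirst n))) : IsMarriageable n π := by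
  obtain ⟨-, i, j, hij, hi, hj, -, hnc⟩ := hm
  obtain ⟨hi, hi1⟩ := h.1.singleton_mem_of_mem_image_joinFirst hi
  obtain ⟨hj, hj1⟩ := h.1.singleton_mem_of_mem_image_joinFirst hj
  have hpart := h.1.mergeSingles hij hi hj
  refine ⟨h, i, j, hij, hi, hj, hpart, fun hcross => hnc ?_⟩
  refine hcross.of_injOn (fun A _ => subset_joinFirst n A) hpart.injOn_joinFirst
    (mapsTo_mergeSingles_image h.1.injOn_joinFirst hi hj ?_ ?_ ?_) <;>
  · refine joinFirst_of_one_notMem ?_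
    simp [hi1.symm, hj1.symm]

end IsNCPartition

lemma IsLonely.image_joinFirst {n : ℕ} (hn : 1 ≤ n) {π : Finset (Finset ℕ)} (h : IsLonely n π) :
    IsLonely (n + 1) (π.image (joinFirst n)) :=
  ⟨h.1.image_joinFirst hn, fun hm => h.2 (h.1.isMarriageable_of_image_joinFirst hm)⟩

theorem stmt2 (n : ℕ) (hn : 1 ≤ n) :
    (∀ π : Finset (Finset ℕ), IsLonely n π →
      IsLonely (n + 1) (π.image fun A => if 1 ∈ A then insert (n + 1) A else A)) ∧
    (∀ π πQ : Finset (Finset ℕ), IsLonely n π → IsLonely n πQ →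
      (π.image fun A => if 1 ∈ A then insert (n + 1) A else A) =
        (πQ.image fun A => if 1 ∈ A then insert (n + 1) A else A) → π = πQ) := by
  refine ⟨fun π h => h.image_joinFirst hn, fun π πQ h hQ heq => ?_⟩
  rw [← h.1.1.image_erase_image_joinFirst, ← hQ.1.1.image_erase_image_joinFirst]
  exact congrArg (image fun A => A.erase (n + 1)) heq
end

section
/- The sequence (L_n) of numbers of lonely singles partitions is strictly increasing for n ≥ 2: L_n < L_{n+1} for all n ≥ 2. -/
/-!
Adjoining `n + 1` to the block that contains `n` sends noncrossing partitions of `[n]` injectively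
to noncrossing partitions of `[n + 1]` (erasing `n + 1` undoes it), and creates no new singleton.
Two singletons of the image are singletons of the original partition, and merging them commutes
with the extension, so a lonely partition stays lonely. In the image `n` and `n + 1` always share a
block, so the lonely partition `{[n], {n + 1}}` (lonely for `n ≥ 2`, as `{n + 1}` is its only
singleton) is missed, and the inclusion is strict.
-/

open Finset

def extendBlock (n : ℕ) (A : Finset ℕ) : Finset ℕ := if n ∈ A then insert (n + 1) A else A

def extendPartition (n : ℕ) (π : Finset (Finset ℕ)) : Finset (Finset ℕ) :=
  π.image (extendBlock n)

section ExtendBlock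

variable {n x : ℕ} {A : Finset ℕ}

theorem mem_extendBlock : x ∈ extendBlock n A ↔ x ∈ A ∨ (x = n + 1 ∧ n ∈ A) := by
  unfold extendBlock
  split_ifs with h <;> simp [h, or_comm]

theorem subset_extendBlock (n : ℕ) (A : Finset ℕ) : A ⊆ extendBlock n A :=
  fun _ hx => mem_extendBlock.2 (Or.inl hx)

theorem extendBlock_of_notMem (h : n ∉ A) : extendBlock n A = A := if_neg h

theorem erase_extendBlock (h : n + 1 ∉ A) : (extendBlock n A).erase (n + 1) = A := by
  unfold extendBlock
  split_ifs
  · exact erase_insert h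
  · exact erase_eq_of_notMem h

theorem eq_singleton_of_extendBlock_eq_singleton (h : extendBlock n A = {x}) :
    A = {x} ∧ n ∉ A := by
  have hn : n ∉ A := fun hn => by
    have h₁ : n ∈ extendBlock n A := subset_extendBlock n A hn
    have h₂ : n + 1 ∈ extendBlock n A := mem_extendBlock.2 (Or.inr ⟨rfl, hn⟩)
    rw [h, mem_singleton] at h₁ h₂
    omega
  exact ⟨extendBlock_of_notMem hn ▸ h, hn⟩

end ExtendBlock

section Partition

variable {n : ℕ} {π : Finset (Finset ℕ)}

theorem IsPartitionOf.subset_Icc (h : IsPartitionOf n π) {A : Finset ℕ} (hA : A ∈ π) :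
    A ⊆ Icc 1 n :=
  fun x hx => (h.2.2 x).2 ⟨A, hA, hx⟩

theorem IsPartitionOf.succ_notMem_s3 (h : IsPartitionOf n π) {A : Finset ℕ} (hA : A ∈ π) :
    n + 1 ∉ A :=
  fun hn => by simpa using h.subset_Icc hA hn

theorem setOf_isPartitionOf_finite (n : ℕ) : {π | IsPartitionOf n π}.Finite :=
  (Icc 1 n).powerset.powerset.finite_toSet.subset fun _ hπ =>
    mem_powerset.2 fun _ hA => mem_powerset.2 (hπ.subset_Icc hA)

theorem image_erase_extendPartition (h : IsPartitionOf n π) :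
    (extendPartition n π).image (·.erase (n + 1)) = π := by
  rw [extendPartition, image_image]
  exact (image_congr fun A hA => erase_extendBlock (h.succ_notMem_s3 hA)).trans image_id

theorem injOn_extendPartition : Set.InjOn (extendPartition n) {π | IsPartitionOf n π} :=
  fun π₁ h₁ π₂ h₂ heq => by
    rw [← image_erase_extendPartition h₁, ← image_erase_extendPartition h₂, heq]

theorem exists_mem_extendPartition (h : IsPartitionOf n π) (hn : 1 ≤ n) :
    ∃ B ∈ extendPartition n π, n ∈ B ∧ n + 1 ∈ B := by
  obtain ⟨B, hB, hnB⟩ := (h.2.2 n).1 (by simp [hn])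
  exact ⟨extendBlock n B, mem_image_of_mem _ hB, subset_extendBlock n B hnB,
    mem_extendBlock.2 (Or.inr ⟨rfl, hnB⟩)⟩

end Partition

section Crossing

variable {n : ℕ} {σ : Finset (Finset ℕ)}

theorem Crossing.image {g : Finset ℕ → Finset ℕ} (hg : ∀ A ∈ σ, A ⊆ g A)
    (hinj : Set.InjOn g σ) (h : Crossing σ) : Crossing (σ.image g) := by
  obtain ⟨A, hA, B, hB, hAB, a, ha, b, hb, c, hc, d, hd, hac, hcb, hbd⟩ := h
  exact ⟨g A, mem_image_of_mem g hA, g B, mem_image_of_mem g hB, hinj.ne hA hB hAB,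
    a, hg A hA ha, b, hg A hA hb, c, hg B hB hc, d, hg B hB hd, hac, hcb, hbd⟩

theorem crossing_extendPartition_iff (hp : IsPartitionOf n σ) :
    Crossing (extendPartition n σ) ↔ Crossing σ := by
  refine ⟨?_, Crossing.image (fun A _ => subset_extendBlock n A) fun A hA B hB h => ?_⟩
  swap
  · rw [← erase_extendBlock (hp.succ_notMem_s3 hA), h, erase_extendBlock (hp.succ_notMem_s3 hB)]
  rintro ⟨_, hA', _, hB', hAB, a, ha, b, hb, c, hc, d, hd, hac, hcb, hbd⟩
  obtain ⟨A, hA, rfl⟩ := mem_image.1 hA'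
  obtain ⟨B, hB, rfl⟩ := mem_image.1 hB'
  replace hAB : A ≠ B := fun h => hAB (h ▸ rfl)
  -- only `d` can be the new element `n + 1`, since it is the largest of the four
  have hd_le : d ≤ n + 1 := by
    rcases mem_extendBlock.1 hd with hd | ⟨rfl, -⟩
    · exact (mem_Icc.1 (hp.subset_Icc hB hd)).2.trans (Nat.le_succ n)
    · rfl
  have mem_of_lt {X : Finset ℕ} {x : ℕ} (hX : X ∈ σ) (hx : x ∈ extendBlock n X)
      (hxd : x < d) : x ∈ X := by
    rcases mem_extendBlock.1 hx with hx | ⟨rfl, -⟩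
    · exact hx
    · omega
  have ha' := mem_of_lt hA ha (by omega)
  have hb' := mem_of_lt hA hb hbd
  have hc' := mem_of_lt hB hc (by omega)
  rcases mem_extendBlock.1 hd with hd' | ⟨rfl, hnB⟩
  · exact ⟨A, hA, B, hB, hAB, a, ha', b, hb', c, hc', d, hd', hac, hcb, hbd⟩
  · have hbn : b ≠ n := fun hbn => disjoint_left.1 (hp.2.1 A hA B hB hAB) hb' (hbn ▸ hnB)
    have hb_le : b ≤ n := (mem_Icc.1 (hp.subset_Icc hA hb')).2
    exact ⟨A, hA, B, hB, hAB, a, ha', b, hb', c, hc', n, hnB, hac, hcb, by omega⟩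

end Crossing

section Merge

variable {n i j : ℕ} {π : Finset (Finset ℕ)}

theorem mem_mergeSingles {X : Finset ℕ} :
    X ∈ mergeSingles π i j ↔ X = {i, j} ∨ X ≠ {j} ∧ X ≠ {i} ∧ X ∈ π := by
  simp only [mergeSingles, mem_insert, mem_erase]

theorem biUnion_mergeSingles (hij : i ≠ j) (hi : {i} ∈ π) (hj : {j} ∈ π) :
    (mergeSingles π i j).biUnion id = π.biUnion id := by
  have hj' : {j} ∈ π.erase {i} := mem_erase.2 ⟨by simpa using hij.symm, hj⟩
  conv_rhs => rw [← insert_erase hi, ← insert_erase hj']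
  rw [mergeSingles, biUnion_insert, biUnion_insert, biUnion_insert, id, id, id, insert_eq,
    union_assoc]

theorem disjoint_pair_of_mem (hp : IsPartitionOf n π) (hi : {i} ∈ π) (hj : {j} ∈ π)
    {B : Finset ℕ} (hB : B ∈ π) (hBi : B ≠ {i}) (hBj : B ≠ {j}) : Disjoint {i, j} B := by
  rw [insert_eq, disjoint_union_left]
  exact ⟨hp.2.1 _ hi _ hB hBi.symm, hp.2.1 _ hj _ hB hBj.symm⟩

theorem isPartitionOf_mergeSingles (hp : IsPartitionOf n π) (hij : i ≠ j) (hi : {i} ∈ π)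
    (hj : {j} ∈ π) : IsPartitionOf n (mergeSingles π i j) := by
  refine ⟨fun A hA => ?_, fun A hA B hB hAB => ?_, fun x => ?_⟩
  · rcases mem_mergeSingles.1 hA with rfl | ⟨-, -, hA⟩
    · exact insert_nonempty i {j}
    · exact hp.1 A hA
  · rcases mem_mergeSingles.1 hA with rfl | ⟨hAj, hAi, hA⟩ <;>
      rcases mem_mergeSingles.1 hB with rfl | ⟨hBj, hBi, hB⟩
    · exact absurd rfl hAB
    · exact disjoint_pair_of_mem hp hi hj hB hBi hBj
    · exact (disjoint_pair_of_mem hp hi hj hA hAi hAj).symm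
    · exact hp.2.1 A hA B hB hAB
  · have hcover := biUnion_mergeSingles hij hi hj
    simp only [Finset.ext_iff, mem_biUnion, id] at hcover
    rw [hp.2.2 x, hcover]

theorem singleton_mem_of_mem_extendPartition (h : {i} ∈ extendPartition n π) :
    {i} ∈ π ∧ i ≠ n := by
  obtain ⟨A, hA, hAi⟩ := mem_image.1 h
  obtain ⟨rfl, hn⟩ := eq_singleton_of_extendBlock_eq_singleton hAi
  exact ⟨hA, fun h => hn (h ▸ mem_singleton_self i)⟩

theorem mergeSingles_extendPartition (hin : i ≠ n) (hjn : j ≠ n) :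
    mergeSingles (extendPartition n π) i j = extendPartition n (mergeSingles π i j) := by
  have hpair : extendBlock n {i, j} = {i, j} := extendBlock_of_notMem (by simp [hin.symm, hjn.symm])
  have hsing {k : ℕ} (hk : k ≠ n) : extendBlock n {k} = {k} :=
    extendBlock_of_notMem (by simpa using hk.symm)
  ext X
  simp only [extendPartition, mem_mergeSingles, mem_image]
  constructor
  · rintro (rfl | ⟨hXj, hXi, A, hA, rfl⟩)
    · exact ⟨{i, j}, Or.inl rfl, hpair⟩
    · exact ⟨A, Or.inr ⟨fun h => hXj (h ▸ hsing hjn), fun h => hXi (h ▸ hsing hin), hA⟩,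
        rfl⟩
  · rintro ⟨A, rfl | ⟨hAj, hAi, hA⟩, rfl⟩
    · exact Or.inl hpair
    · exact Or.inr ⟨fun h => hAj (eq_singleton_of_extendBlock_eq_singleton h).1,
        fun h => hAi (eq_singleton_of_extendBlock_eq_singleton h).1, A, hA, rfl⟩

end Merge

section Extend

variable {n : ℕ} {π : Finset (Finset ℕ)}

theorem disjoint_extendBlock {A B : Finset ℕ} (hA : n + 1 ∉ A) (hB : n + 1 ∉ B)
    (h : Disjoint A B) : Disjoint (extendBlock n A) (extendBlock n B) := by
  unfold extendBlock
  split_ifs with hnA hnB hnB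
  · exact absurd hnB (disjoint_left.1 h hnA)
  · exact disjoint_insert_left.2 ⟨hB, h⟩
  · exact disjoint_insert_right.2 ⟨hA, h⟩
  · exact h

theorem isPartitionOf_extendPartition (hp : IsPartitionOf n π) (hn : 1 ≤ n) :
    IsPartitionOf (n + 1) (extendPartition n π) := by
  refine ⟨fun _ hA' => ?_, fun _ hA' _ hB' hAB => ?_, fun x => ⟨fun hx => ?_, ?_⟩⟩
  · obtain ⟨A, hA, rfl⟩ := mem_image.1 hA'
    exact (hp.1 A hA).mono (subset_extendBlock n A)
  · obtain ⟨A, hA, rfl⟩ := mem_image.1 hA'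
    obtain ⟨B, hB, rfl⟩ := mem_image.1 hB'
    exact disjoint_extendBlock (hp.succ_notMem_s3 hA) (hp.succ_notMem_s3 hB)
      (hp.2.1 A hA B hB fun h => hAB (h ▸ rfl))
  · obtain hx | rfl : x ∈ Icc 1 n ∨ x = n + 1 := by
      simp only [mem_Icc] at hx ⊢
      omega
    · obtain ⟨A, hA, hxA⟩ := (hp.2.2 x).1 hx
      exact ⟨_, mem_image_of_mem _ hA, subset_extendBlock n A hxA⟩
    · exact exists_mem_extendPartition hp hn |>.imp fun _ h => ⟨h.1, h.2.2⟩
  · rintro ⟨_, hA', hx⟩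
    obtain ⟨A, hA, rfl⟩ := mem_image.1 hA'
    rcases mem_extendBlock.1 hx with hx | ⟨rfl, -⟩
    · exact Icc_subset_Icc_right n.le_succ (hp.subset_Icc hA hx)
    · simp

theorem isNCPartition_extendPartition (h : IsNCPartition n π) (hn : 1 ≤ n) :
    IsNCPartition (n + 1) (extendPartition n π) :=
  ⟨isPartitionOf_extendPartition h.1 hn, (crossing_extendPartition_iff h.1).not.2 h.2⟩

theorem isLonely_extendPartition (h : IsLonely n π) (hn : 1 ≤ n) :
    IsLonely (n + 1) (extendPartition n π) := by
  refine ⟨isNCPartition_extendPartition h.1 hn, ?_⟩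
  rintro ⟨-, i, j, hij, hi, hj, -, hmerge⟩
  obtain ⟨hi, hin⟩ := singleton_mem_of_mem_extendPartition hi
  obtain ⟨hj, hjn⟩ := singleton_mem_of_mem_extendPartition hj
  have hp := isPartitionOf_mergeSingles h.1.1 hij hi hj
  rw [mergeSingles_extendPartition hin hjn, crossing_extendPartition_iff hp] at hmerge
  exact h.2 ⟨h.1, i, j, hij, hi, hj, hp, hmerge⟩

end Extend

section Witness

variable {n : ℕ} {π : Finset (Finset ℕ)}

theorem isNCPartition_singleton_Icc (hn : 1 ≤ n) : IsNCPartition n {Icc 1 n} := by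
  refine ⟨⟨?_, ?_, fun x => by simp⟩, ?_⟩
  · simpa using hn
  · simp
  · rintro ⟨A, hA, B, hB, hAB, -⟩
    rw [mem_singleton] at hA hB
    exact hAB (hA.trans hB.symm)

theorem IsNCPartition.insert_singleton_succ (h : IsNCPartition n π) :
    IsNCPartition (n + 1) (insert {n + 1} π) := by
  obtain ⟨hp, hnc⟩ := h
  refine ⟨⟨?_, ?_, fun x => ?_⟩, ?_⟩
  · simpa only [forall_mem_insert] using ⟨singleton_nonempty _, hp.1⟩
  · have hsucc (B) (hB : B ∈ π) : Disjoint {n + 1} B :=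
      disjoint_singleton_left.2 (hp.succ_notMem_s3 hB)
    rintro A hA B hB hAB
    rcases mem_insert.1 hA with rfl | hA <;> rcases mem_insert.1 hB with rfl | hB
    · exact absurd rfl hAB
    · exact hsucc B hB
    · exact (hsucc A hA).symm
    · exact hp.2.1 A hA B hB hAB
  · rw [exists_mem_insert, mem_singleton, ← hp.2.2 x, mem_Icc, mem_Icc]
    omega
  · rintro ⟨A, hA, B, hB, hAB, a, ha, b, hb, c, hc, d, hd, hac, hcb, hbd⟩
    rcases mem_insert.1 hA with rfl | hA
    · rw [mem_singleton] at ha hb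
      omega
    rcases mem_insert.1 hB with rfl | hB
    · rw [mem_singleton] at hc hd
      omega
    exact hnc ⟨A, hA, B, hB, hAB, a, ha, b, hb, c, hc, d, hd, hac, hcb, hbd⟩

theorem isLonely_singleton_succ_Icc (hn : 2 ≤ n) :
    IsLonely (n + 1) {{n + 1}, Icc 1 n} := by
  refine ⟨(isNCPartition_singleton_Icc (by omega)).insert_singleton_succ, ?_⟩
  have hsingle {k : ℕ} (hk : {k} ∈ ({{n + 1}, Icc 1 n} : Finset (Finset ℕ))) : k = n + 1 := by
    rcases mem_insert.1 hk with hk | hk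
    · exact singleton_inj.1 hk
    · have := congrArg card (mem_singleton.1 hk)
      simp only [card_singleton, Nat.card_Icc] at this
      omega
  rintro ⟨-, i, j, hij, hi, hj, -⟩
  exact hij ((hsingle hi).trans (hsingle hj).symm)

end Witness

theorem stmt3 (n : ℕ) (hn : 2 ≤ n) : Lnum n < Lnum (n + 1) := by
  have himage : extendPartition n '' {π | IsLonely n π} ⊂ {π | IsLonely (n + 1) π} := by
    refine (Set.ssubset_iff_of_subset ?_).2 ⟨_, isLonely_singleton_succ_Icc hn, ?_⟩
    · rintro _ ⟨π, hπ, rfl⟩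
      exact isLonely_extendPartition hπ (by omega)
    · rintro ⟨π, hπ, heq⟩
      obtain ⟨B, hB, hnB, hsuccB⟩ := exists_mem_extendPartition hπ.1.1 (by omega)
      rw [heq, mem_insert, mem_singleton] at hB
      rcases hB with rfl | rfl
      · simp at hnB
      · simp at hsuccB
  calc Lnum n = (extendPartition n '' {π | IsLonely n π}).ncard :=
        ((injOn_extendPartition.mono fun _ hπ => hπ.1.1).ncard_image).symm
    _ < Lnum (n + 1) :=
        Set.ncard_lt_ncard himage ((setOf_isPartitionOf_finite _).subset fun _ hπ => hπ.1.1)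
end

section
/- For all n ≥ 0, C_n + 3·M_n ≤ M_{n+2}, where C_n is the number of noncrossing partitions of [n] and M_n is the number of marriageable singles partitions of [n]. -/
/-!
Four injections into the marriageable singles partitions of `[n + 2]`, with pairwise disjoint
images, give the bound. A noncrossing partition of `[n]` gets the two new singletons
`{n + 1}`, `{n + 2}`, which can marry. A marriageable one either gets the block `{n + 1, n + 2}`,
or is shifted up by one and enclosed in the block `{1, n + 2}`, or has `n + 1` added to the block
of `n` and gets the singleton `{n + 2}` (which replaces `n` as a partner if needed). The images
are told apart by the blocks of `n + 1` and `n + 2`.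

Marriageability is checked through a criterion: merging singletons `i < j` of a noncrossing
partition keeps it noncrossing iff no block has an element strictly between `i` and `j` and
another one outside `[i, j]`.
-/

open Finset

section Partition

variable {α β : Type*}

def IsPartitionOn (S : Finset α) (π : Finset (Finset α)) : Prop :=
  (∀ A ∈ π, A.Nonempty) ∧ (∀ A ∈ π, ∀ B ∈ π, A ≠ B → Disjoint A B) ∧
    ∀ x, x ∈ S ↔ ∃ A ∈ π, x ∈ A

def pullback [DecidableEq α] [DecidableEq β] (T : Finset α) (p : α → β)
    (π : Finset (Finset β)) : Finset (Finset α) :=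
  π.image fun B => T.filter (p · ∈ B)

namespace IsPartitionOn

variable {S : Finset α} {π : Finset (Finset α)} {A B : Finset α} {x : α}

theorem subset (h : IsPartitionOn S π) (hA : A ∈ π) : A ⊆ S :=
  fun x hx => (h.2.2 x).2 ⟨A, hA, hx⟩

theorem eq_of_mem_of_mem (h : IsPartitionOn S π) (hA : A ∈ π) (hB : B ∈ π) (hxA : x ∈ A)
    (hxB : x ∈ B) : A = B := by
  by_contra hAB
  exact disjoint_left.1 (h.2.1 A hA B hB hAB) hxA hxB

theorem not_mem_of_not_subset (h : IsPartitionOn S π) (hB : ¬B ⊆ S) : B ∉ π :=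
  fun hBπ => hB (h.subset hBπ)

theorem ne_of_mem {σ' : Finset (Finset α)} (h : IsPartitionOn S π) (hA : A ∈ π) (hB : B ∈ σ')
    (hxA : x ∈ A) (hxB : x ∈ B) (hAB : A ≠ B) : π ≠ σ' :=
  fun hπσ => hAB (h.eq_of_mem_of_mem hA (hπσ ▸ hB) hxA hxB)

variable [DecidableEq α]

protected theorem insert (h : IsPartitionOn S π) (hB : B.Nonempty) (hBS : Disjoint B S) :
    IsPartitionOn (B ∪ S) (insert B π) := by
  refine ⟨?_, ?_, fun x => ?_⟩
  · simpa only [forall_mem_insert] using ⟨hB, h.1⟩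
  · have hBA : ∀ A ∈ π, Disjoint B A := fun A hA => hBS.mono_right (h.subset hA)
    simp only [mem_insert]
    rintro A (rfl | hA) C (rfl | hC) hAC
    · exact absurd rfl hAC
    · exact hBA C hC
    · exact (hBA A hA).symm
    · exact h.2.1 A hA C hC hAC
  · simp [h.2.2 x]

protected theorem erase (h : IsPartitionOn S π) (hA : A ∈ π) :
    IsPartitionOn (S \ A) (π.erase A) := by
  refine ⟨fun C hC => h.1 C (mem_of_mem_erase hC),
    fun C hC D hD => h.2.1 C (mem_of_mem_erase hC) D (mem_of_mem_erase hD), fun x => ?_⟩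
  simp only [mem_sdiff, h.2.2 x, mem_erase]
  constructor
  · rintro ⟨⟨C, hC, hxC⟩, hxA⟩
    exact ⟨C, ⟨fun hCA => hxA (hCA ▸ hxC), hC⟩, hxC⟩
  · rintro ⟨C, ⟨hCA, hC⟩, hxC⟩
    exact ⟨⟨C, hC, hxC⟩, fun hxA => hCA (h.eq_of_mem_of_mem hC hA hxC hxA)⟩

end IsPartitionOn

theorem subset_of_mem_pullback [DecidableEq α] [DecidableEq β] {T : Finset α} {p : α → β}
    {π : Finset (Finset β)} {A : Finset α} (hA : A ∈ pullback T p π) : A ⊆ T := by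
  obtain ⟨B, -, rfl⟩ := mem_image.1 hA
  exact filter_subset _ _

theorem insert_injOn [DecidableEq α] (B : Finset α) :
    Set.InjOn (insert B) {π : Finset (Finset α) | B ∉ π} := fun π hπ σ hσ h => by
  rw [← erase_insert (Set.mem_ofPred.1 hπ), h, erase_insert (Set.mem_ofPred.1 hσ)]

section Pullback

variable [DecidableEq α] [DecidableEq β] {T : Finset α} {S : Finset β} {p : α → β}
  {π : Finset (Finset β)}

protected theorem IsPartitionOn.pullback (h : IsPartitionOn S π) (hmaps : Set.MapsTo p T S)
    (hsurj : Set.SurjOn p T S) : IsPartitionOn T (pullback T p π) := by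
  refine ⟨?_, ?_, fun x => ?_⟩
  · simp only [pullback, forall_mem_image]
    intro B hB
    obtain ⟨y, hy⟩ := h.1 B hB
    obtain ⟨x, hx, rfl⟩ := hsurj (h.subset hB hy)
    exact ⟨x, mem_filter.2 ⟨hx, hy⟩⟩
  · simp only [pullback, forall_mem_image]
    intro B hB C hC hBC
    have hdisj := h.2.1 B hB C hC fun hBC' => hBC (hBC' ▸ rfl)
    exact disjoint_left.2 fun x hxB hxC =>
      disjoint_left.1 hdisj (mem_filter.1 hxB).2 (mem_filter.1 hxC).2
  · simp only [pullback, exists_mem_image, mem_filter]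
    refine ⟨fun hx => ?_, fun ⟨_, _, hx, _⟩ => hx⟩
    obtain ⟨B, hB, hpx⟩ := (h.2.2 (p x)).1 (hmaps hx)
    exact ⟨B, hB, hx, hpx⟩

theorem IsPartitionOn.image_image_pullback (h : IsPartitionOn S π) (hsurj : Set.SurjOn p T S) :
    (pullback T p π).image (image p) = π := by
  rw [pullback, image_image]
  refine (image_congr fun B hB => ?_).trans image_id
  ext y
  simp only [Function.comp_apply, mem_image, mem_filter, id]
  refine ⟨fun ⟨x, ⟨_, hx⟩, hxy⟩ => hxy ▸ hx, fun hy => ?_⟩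
  obtain ⟨x, hx, rfl⟩ := hsurj (h.subset hB hy)
  exact ⟨x, ⟨hx, hy⟩, rfl⟩

theorem injOn_pullback (hsurj : Set.SurjOn p T S) :
    Set.InjOn (pullback T p) {π | IsPartitionOn S π} := fun π hπ σ hσ h => by
  rw [← hπ.image_image_pullback hsurj, h, hσ.image_image_pullback hsurj]

end Pullback

end Partition

theorem finite_setOf_isPartitionOn {α : Type*} (S : Finset α) :
    {π | IsPartitionOn S π}.Finite :=
  S.powerset.powerset.finite_toSet.subset fun _ hπ =>
    Finset.mem_powerset.2 fun _ hA => Finset.mem_powerset.2 (IsPartitionOn.subset hπ hA)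

section Noncrossing

variable {S T : Finset ℕ} {π σ : Finset (Finset ℕ)} {A B : Finset ℕ} {i j : ℕ}

def Crosses (A B : Finset ℕ) : Prop :=
  ∃ a ∈ A, ∃ b ∈ A, ∃ c ∈ B, ∃ d ∈ B, a < c ∧ c < b ∧ b < d

def Straddles (A : Finset ℕ) (i j : ℕ) : Prop :=
  ∃ x ∈ A, ∃ y ∈ A, i < x ∧ x < j ∧ (y < i ∨ j < y)

def LiesOutside (B S : Finset ℕ) : Prop :=
  ∀ z ∈ B, (∀ x ∈ S, z < x) ∨ ∀ x ∈ S, x < z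

/-- `IsNCPartition n` is definitionally `IsNCOn (Icc 1 n)`; this is used silently below. -/
def IsNCOn (S : Finset ℕ) (π : Finset (Finset ℕ)) : Prop :=
  IsPartitionOn S π ∧ ¬Crossing π

def IsMarriageableOn (S : Finset ℕ) (π : Finset (Finset ℕ)) : Prop :=
  IsNCOn S π ∧ ∃ i j, i < j ∧ {i} ∈ π ∧ {j} ∈ π ∧ ∀ A ∈ π, ¬Straddles A i j

theorem Crossing.mono (h : Crossing π) (hπσ : π ⊆ σ) : Crossing σ := by
  obtain ⟨A, hA, B, hB, hAB, hcross⟩ := h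
  exact ⟨A, hπσ hA, B, hπσ hB, hAB, hcross⟩

theorem crossing_insert_iff :
    Crossing (insert B π) ↔ Crossing π ∨ ∃ A ∈ π, A ≠ B ∧ (Crosses A B ∨ Crosses B A) := by
  constructor
  · rintro ⟨A, hA, C, hC, hAC, hcross⟩
    rw [mem_insert] at hA hC
    rcases hA with rfl | hA <;> rcases hC with rfl | hC
    · exact absurd rfl hAC
    · exact Or.inr ⟨C, hC, hAC.symm, Or.inr hcross⟩
    · exact Or.inr ⟨A, hA, hAC, Or.inl hcross⟩
    · exact Or.inl ⟨A, hA, C, hC, hAC, hcross⟩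
  · rintro (h | ⟨A, hA, hAB, hcross | hcross⟩)
    · exact h.mono (subset_insert B π)
    · exact ⟨A, mem_insert_of_mem hA, B, mem_insert_self B π, hAB, hcross⟩
    · exact ⟨B, mem_insert_self B π, A, mem_insert_of_mem hA, hAB.symm, hcross⟩

theorem crosses_pair_or_crosses_iff (hij : i < j) :
    Crosses A {i, j} ∨ Crosses {i, j} A ↔ Straddles A i j := by
  simp only [Crosses, Straddles, mem_insert, mem_singleton]
  constructor
  · rintro (⟨a, ha, b, hb, c, hc, d, hd, hac, hcb, hbd⟩ |
      ⟨a, ha, b, hb, c, hc, d, hd, hac, hcb, hbd⟩)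
    · exact ⟨b, hb, a, ha, by omega, by omega, by omega⟩
    · exact ⟨c, hc, d, hd, by omega, by omega, by omega⟩
  · rintro ⟨x, hx, y, hy, hix, hxj, hy' | hy'⟩
    · exact Or.inl ⟨y, hy, x, hx, i, Or.inl rfl, j, Or.inr rfl, hy', hix, hxj⟩
    · exact Or.inr ⟨i, Or.inl rfl, j, Or.inr rfl, x, hx, y, hy, hix, hxj, hy'⟩

namespace LiesOutside

variable (hout : LiesOutside B S)
include hout

theorem not_between {x y z : ℕ} (hz : z ∈ B) (hx : x ∈ S) (hy : y ∈ S) : ¬(x < z ∧ z < y) := by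
  rcases hout z hz with h | h
  · exact fun hxz => (h x hx).not_gt hxz.1
  · exact fun hzy => (h y hy).not_gt hzy.2

protected theorem disjoint : Disjoint B S :=
  disjoint_left.2 fun z hzB hzS => by
    rcases hout z hzB with h | h <;> exact lt_irrefl z (h z hzS)

theorem not_crosses (hA : A ⊆ S) : ¬(Crosses A B ∨ Crosses B A) := by
  rintro (⟨a, ha, b, hb, c, hc, -, -, hac, hcb, -⟩ | ⟨-, -, b, hb, c, hc, d, hd, -, hcb, hbd⟩)
  · exact hout.not_between hc (hA ha) (hA hb) ⟨hac, hcb⟩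
  · exact hout.not_between hb (hA hc) (hA hd) ⟨hcb, hbd⟩

theorem not_straddles (hi : i ∈ S) (hj : j ∈ S) : ¬Straddles B i j :=
  fun ⟨_, hx, _, _, hix, hxj, _⟩ => hout.not_between hx hi hj ⟨hix, hxj⟩

end LiesOutside

protected theorem IsNCOn.insert (h : IsNCOn S π) (hB : B.Nonempty) (hout : LiesOutside B S) :
    IsNCOn (B ∪ S) (insert B π) :=
  ⟨h.1.insert hB hout.disjoint, fun hcross => (crossing_insert_iff.1 hcross).elim h.2
    fun ⟨_, hA, _, hAB⟩ => hout.not_crosses (h.1.subset hA) hAB⟩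

protected theorem IsNCOn.pullback {p : ℕ → ℕ} (h : IsNCOn S π) (hmaps : Set.MapsTo p T S)
    (hsurj : Set.SurjOn p T S) (hp : Monotone p) : IsNCOn T (pullback T p π) := by
  refine ⟨h.1.pullback hmaps hsurj, ?_⟩
  rintro ⟨_, hA', _, hB', hAB, a, ha, b, hb, c, hc, d, hd, hac, hcb, hbd⟩
  obtain ⟨A, hA, rfl⟩ := mem_image.1 hA'
  obtain ⟨B, hB, rfl⟩ := mem_image.1 hB'
  simp only [mem_filter] at ha hb hc hd
  have hdisj := disjoint_left.1 (h.1.2.1 A hA B hB fun hAB' => hAB (hAB' ▸ rfl))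
  have hne : ∀ {x y}, p x ∈ A → p y ∈ B → p x ≠ p y := fun hx hy hxy => hdisj hx (hxy ▸ hy)
  exact h.2 ⟨A, hA, B, hB, fun hAB' => hAB (hAB' ▸ rfl), p a, ha.2, p b, hb.2, p c, hc.2, p d,
    hd.2, (hp hac.le).lt_of_ne (hne ha.2 hc.2), (hp hcb.le).lt_of_ne (hne hb.2 hc.2).symm,
    (hp hbd.le).lt_of_ne (hne hb.2 hd.2)⟩

end Noncrossing

section Marriage

variable {S T : Finset ℕ} {π : Finset (Finset ℕ)} {B : Finset ℕ} {i j : ℕ}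

theorem mergeSingles_comm (π : Finset (Finset ℕ)) (i j : ℕ) :
    mergeSingles π i j = mergeSingles π j i := by
  rw [mergeSingles, mergeSingles, pair_comm, erase_right_comm]

theorem IsPartitionOn.mergeSingles (h : IsPartitionOn S π) (hi : {i} ∈ π) (hj : {j} ∈ π)
    (hij : i ≠ j) : IsPartitionOn S (mergeSingles π i j) := by
  have hsub : {i, j} ⊆ S := insert_subset (h.subset hi (mem_singleton_self i)) (h.subset hj)
  have h' := (h.erase hi).erase (mem_erase.2 ⟨by simpa using hij.symm, hj⟩)
  rw [sdiff_sdiff_left, sup_eq_union, ← insert_eq] at h'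
  simpa only [_root_.mergeSingles, union_sdiff_of_subset hsub] using
    h'.insert (insert_nonempty i {j}) disjoint_sdiff

theorem IsNCOn.mergeSingles_iff (h : IsNCOn S π) (hi : {i} ∈ π) (hj : {j} ∈ π) (hij : i < j) :
    IsNCOn S (mergeSingles π i j) ↔ ∀ A ∈ π, ¬Straddles A i j := by
  have hρ : (π.erase {i}).erase {j} ⊆ π := (erase_subset _ _).trans (erase_subset _ _)
  rw [IsNCOn, and_iff_right (h.1.mergeSingles hi hj hij.ne), mergeSingles, crossing_insert_iff,
    not_or, and_iff_right fun hcross => h.2 (hcross.mono hρ)]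
  simp only [crosses_pair_or_crosses_iff hij, not_exists, not_and]
  refine ⟨fun H A hA hs => ?_, fun H A hA _ => H A (hρ hA)⟩
  have hne : ∀ C ⊆ {i, j}, A ≠ C := fun C hC hAC => by
    obtain ⟨x, hx, -, -, hix, hxj, -⟩ := hs
    have := hC (hAC ▸ hx)
    simp only [mem_insert, mem_singleton] at this
    omega
  exact H A (mem_erase.2 ⟨hne _ (by simp), mem_erase.2 ⟨hne _ (by simp), hA⟩⟩) (hne _ subset_rfl) hs

theorem isMarriageable_iff {n : ℕ} : IsMarriageable n π ↔ IsMarriageableOn (Icc 1 n) π := by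
  constructor
  · rintro ⟨h, i, j, hij, hi, hj, hm⟩
    rcases hij.lt_or_gt with hij | hji
    · exact ⟨h, i, j, hij, hi, hj, (IsNCOn.mergeSingles_iff h hi hj hij).1 hm⟩
    · rw [mergeSingles_comm] at hm
      exact ⟨h, j, i, hji, hj, hi, (IsNCOn.mergeSingles_iff h hj hi hji).1 hm⟩
  · rintro ⟨h, i, j, hij, hi, hj, hns⟩
    exact ⟨h, i, j, hij.ne, hi, hj, (IsNCOn.mergeSingles_iff h hi hj hij).2 hns⟩

theorem IsMarriageableOn.two_le {n : ℕ} (h : IsMarriageableOn (Icc 1 n) π) : 2 ≤ n := by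
  obtain ⟨hnc, i, j, hij, hi, hj, -⟩ := h
  have := mem_Icc.1 (hnc.1.subset hi (mem_singleton_self i))
  have := mem_Icc.1 (hnc.1.subset hj (mem_singleton_self j))
  omega

protected theorem IsMarriageableOn.insert (h : IsMarriageableOn S π) (hB : B.Nonempty)
    (hout : LiesOutside B S) : IsMarriageableOn (B ∪ S) (insert B π) := by
  obtain ⟨hnc, i, j, hij, hi, hj, hns⟩ := h
  refine ⟨hnc.insert hB hout, i, j, hij, mem_insert_of_mem hi, mem_insert_of_mem hj, ?_⟩
  rw [forall_mem_insert]
  exact ⟨hout.not_straddles (hnc.1.subset hi (mem_singleton_self i))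
    (hnc.1.subset hj (mem_singleton_self j)), hns⟩

/-- Strict monotonicity is needed only outside `[i', j']` (`hlt`, `hgt`); inside, monotonicity
suffices because `{i}` and `{j}` are blocks of `π`. -/
theorem IsPartitionOn.not_straddles_pullback {p : ℕ → ℕ} {i' j' : ℕ} (h : IsPartitionOn S π)
    (hp : Monotone p) (hi : {i} ∈ π) (hj : {j} ∈ π) (hpi : p i' = i) (hpj : p j' = j)
    (hlt : ∀ y ∈ T, y < i' → p y < i) (hgt : ∀ y ∈ T, j' < y → j < p y)
    (hns : ∀ B ∈ π, ¬Straddles B i j) : ∀ A ∈ pullback T p π, ¬Straddles A i' j' := by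
  simp only [pullback, forall_mem_image]
  rintro B hB ⟨x, hx, y, hy, hix, hxj, hy'⟩
  rw [mem_filter] at hx hy
  have hpy : p y < i ∨ j < p y := hy'.imp (hlt y hy.1) (hgt y hy.1)
  have hix' : i ≤ p x := hpi ▸ hp hix.le
  have hxj' : p x ≤ j := hpj ▸ hp hxj.le
  have hne : ∀ k, {k} ∈ π → p x ≠ k := fun k hk hxk => by
    have hBk := h.eq_of_mem_of_mem hB hk hx.2 (hxk ▸ mem_singleton_self k)
    rw [hBk, mem_singleton] at hy
    omega
  exact hns B hB ⟨p x, hx.2, p y, hy.2, hix'.lt_of_ne (hne i hi).symm,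
    hxj'.lt_of_ne (hne j hj), hpy⟩

end Marriage

section Constructions

variable {n : ℕ} {π : Finset (Finset ℕ)}

/-- Pulling back along `· - 1` shifts the blocks of `π` up by one. -/
def enclose (n : ℕ) (π : Finset (Finset ℕ)) : Finset (Finset ℕ) :=
  insert {1, n + 2} (pullback (Icc 2 (n + 1)) (· - 1) π)

/-- Pulling back along `min · n` adds `n + 1` to the block of `n`. -/
def stretch (n : ℕ) (π : Finset (Finset ℕ)) : Finset (Finset ℕ) :=
  insert {n + 2} (pullback (Icc 1 (n + 1)) (min · n) π)

theorem mapsTo_pred : Set.MapsTo (· - 1) (Icc 2 (n + 1) : Set ℕ) (Icc 1 n) := by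
  intro x hx
  simp only [coe_Icc, Set.mem_Icc] at hx ⊢
  omega

theorem surjOn_pred : Set.SurjOn (· - 1) (Icc 2 (n + 1) : Set ℕ) (Icc 1 n) := by
  intro y hy
  simp only [coe_Icc, Set.mem_Icc, Set.mem_image] at hy ⊢
  exact ⟨y + 1, by omega, rfl⟩

theorem mapsTo_min (hn : 1 ≤ n) : Set.MapsTo (min · n) (Icc 1 (n + 1) : Set ℕ) (Icc 1 n) := by
  intro x hx
  simp only [coe_Icc, Set.mem_Icc] at hx ⊢
  omega

theorem surjOn_min : Set.SurjOn (min · n) (Icc 1 (n + 1) : Set ℕ) (Icc 1 n) := by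
  intro y hy
  simp only [coe_Icc, Set.mem_Icc, Set.mem_image] at hy ⊢
  exact ⟨y, by omega, by omega⟩

theorem IsNCOn.isMarriageableOn_insert_insert (h : IsNCOn (Icc 1 n) π) :
    IsMarriageableOn (Icc 1 (n + 2)) (insert {n + 2} (insert {n + 1} π)) := by
  have h₁ := h.insert (singleton_nonempty (n + 1)) fun z hz => Or.inr fun x hx => by
    simp only [mem_singleton, mem_Icc] at hz hx; omega
  have h₂ := h₁.insert (singleton_nonempty (n + 2)) fun z hz => Or.inr fun x hx => by
    simp only [mem_singleton, mem_union, mem_Icc] at hz hx; omega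
  refine ⟨?_, n + 1, n + 2, by omega, by simp, by simp, fun _ _ ⟨_, _, _, _, hx₁, hx₂, _⟩ => by omega⟩
  convert h₂ using 1
  ext x
  simp only [mem_union, mem_singleton, mem_Icc]
  omega

theorem IsMarriageableOn.insert_pair (h : IsMarriageableOn (Icc 1 n) π) :
    IsMarriageableOn (Icc 1 (n + 2)) (insert {n + 1, n + 2} π) := by
  convert h.insert (insert_nonempty (n + 1) {n + 2}) fun z hz => Or.inr fun x hx => by
    simp only [mem_insert, mem_singleton, mem_Icc] at hz hx; omega using 1
  ext x
  simp only [mem_union, mem_insert, mem_singleton, mem_Icc]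
  omega

theorem IsNCOn.enclose (h : IsNCOn (Icc 1 n) π) : IsNCOn (Icc 1 (n + 2)) (enclose n π) := by
  have hS : {1, n + 2} ∪ Icc 2 (n + 1) = Icc 1 (n + 2) := by
    ext x
    simp only [mem_union, mem_insert, mem_singleton, mem_Icc]
    omega
  have hout : LiesOutside {1, n + 2} (Icc 2 (n + 1)) := by
    simp only [LiesOutside, mem_insert, mem_singleton, mem_Icc]
    rintro z (rfl | rfl)
    exacts [Or.inl fun x hx => by omega, Or.inr fun x hx => by omega]
  rw [← hS]
  exact (h.pullback mapsTo_pred surjOn_pred fun _ _ => (Nat.sub_le_sub_right · 1)).insert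
    (insert_nonempty _ _) hout

theorem IsNCOn.stretch (hn : 1 ≤ n) (h : IsNCOn (Icc 1 n) π) :
    IsNCOn (Icc 1 (n + 2)) (stretch n π) := by
  have hS : {n + 2} ∪ Icc 1 (n + 1) = Icc 1 (n + 2) := by
    ext x
    simp only [mem_union, mem_singleton, mem_Icc]
    omega
  rw [← hS]
  exact (h.pullback (mapsTo_min hn) surjOn_min fun _ _ => (min_le_min_right n ·)).insert
    (singleton_nonempty (n + 2)) fun z hz => Or.inr fun x hx => by
      simp only [mem_singleton, mem_Icc] at hz hx; omega

theorem IsMarriageableOn.enclose (h : IsMarriageableOn (Icc 1 n) π) :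
    IsMarriageableOn (Icc 1 (n + 2)) (enclose n π) := by
  obtain ⟨hnc, i, j, hij, hi, hj, hns⟩ := h
  have hsing : ∀ k, {k} ∈ π → {k + 1} ∈ _root_.enclose n π := fun k hk => by
    have hk1 := mem_Icc.1 (hnc.1.subset hk (mem_singleton_self k))
    refine mem_insert_of_mem (mem_image.2 ⟨{k}, hk, ?_⟩)
    ext x
    simp only [mem_filter, mem_Icc, mem_singleton]
    omega
  have hj1 := mem_Icc.1 (hnc.1.subset hj (mem_singleton_self j))
  refine ⟨hnc.enclose, i + 1, j + 1, by omega, hsing i hi, hsing j hj, ?_⟩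
  rw [_root_.enclose, forall_mem_insert]
  refine ⟨fun ⟨x, hx, _, _, hix, hxj, _⟩ => ?_, hnc.1.not_straddles_pullback
    (fun _ _ => (Nat.sub_le_sub_right · 1)) hi hj rfl rfl (fun y hy _ => ?_) (fun y _ _ => ?_) hns⟩
  · simp only [mem_insert, mem_singleton] at hx
    omega
  · rw [mem_Icc] at hy
    omega
  · omega

theorem IsMarriageableOn.stretch (h : IsMarriageableOn (Icc 1 n) π) :
    IsMarriageableOn (Icc 1 (n + 2)) (stretch n π) := by
  obtain ⟨hnc, i, j, hij, hi, hj, hns⟩ := h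
  have hsing : ∀ k < n, {k} ∈ π → {k} ∈ _root_.stretch n π := fun k hkn hk => by
    refine mem_insert_of_mem (mem_image.2 ⟨{k}, hk, ?_⟩)
    have hk1 := mem_Icc.1 (hnc.1.subset hk (mem_singleton_self k))
    ext x
    simp only [mem_filter, mem_Icc, mem_singleton]
    omega
  have hj1 := mem_Icc.1 (hnc.1.subset hj (mem_singleton_self j))
  -- if `j = n`, the singleton `{n}` has been stretched to `{n, n + 1}`: marry `i` to `n + 2`
  obtain ⟨j', hij', hj'n, hj', hpj, hgt⟩ : ∃ j', i < j' ∧ j' ≤ n + 2 ∧ {j'} ∈ _root_.stretch n π ∧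
      min j' n = j ∧ ∀ y ∈ Icc 1 (n + 1), j' < y → j < min y n := by
    rcases hj1.2.lt_or_eq with hjn | rfl
    · exact ⟨j, hij, by omega, hsing j hjn hj, min_eq_left hjn.le, fun y _ _ => by omega⟩
    · exact ⟨j + 2, by omega, le_rfl, mem_insert_self _ _, by omega, fun y hy _ => by
        rw [mem_Icc] at hy; omega⟩
  refine ⟨hnc.stretch (by omega), i, j', hij', hsing i (by omega) hi, hj', ?_⟩
  rw [_root_.stretch, forall_mem_insert]
  refine ⟨fun ⟨x, hx, _, _, _, hxj, _⟩ => ?_, hnc.1.not_straddles_pullback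
    (fun _ _ => (min_le_min_right n ·)) hi hj (by omega) hpj (fun y _ _ => ?_) hgt hns⟩
  · rw [mem_singleton] at hx
    omega
  · omega

end Constructions

section Injectivity

variable {n : ℕ}

theorem injOn_insert_insert :
    Set.InjOn (fun π => insert {n + 2} (insert {n + 1} π)) {π | IsPartitionOn (Icc 1 n) π} := by
  have hnot : ∀ {π}, IsPartitionOn (Icc 1 n) π → {n + 1} ∉ π ∧ {n + 2} ∉ insert {n + 1} π :=
    fun hπ => ⟨hπ.not_mem_of_not_subset (by simp), by
      rw [mem_insert, not_or]; exact ⟨by simp, hπ.not_mem_of_not_subset (by simp)⟩⟩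
  intro π hπ σ hσ h
  exact insert_injOn _ (hnot hπ).1 (hnot hσ).1 (insert_injOn _ (hnot hπ).2 (hnot hσ).2 h)

theorem injOn_insert_pair :
    Set.InjOn (insert {n + 1, n + 2}) {π | IsPartitionOn (Icc 1 n) π} :=
  (insert_injOn _).mono fun _ hπ =>
    (hπ : IsPartitionOn (Icc 1 n) _).not_mem_of_not_subset (by simp [insert_subset_iff])

theorem injOn_enclose : Set.InjOn (enclose n) {π | IsPartitionOn (Icc 1 n) π} :=
  (insert_injOn _).comp (injOn_pullback surjOn_pred) fun _ _ hmem => by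
    simpa using subset_of_mem_pullback hmem (mem_insert_self 1 {n + 2})

theorem injOn_stretch : Set.InjOn (stretch n) {π | IsPartitionOn (Icc 1 n) π} :=
  (insert_injOn _).comp (injOn_pullback surjOn_min) fun _ _ hmem => by
    simpa using subset_of_mem_pullback hmem (mem_singleton_self (n + 2))

end Injectivity

section Disjointness

variable {n : ℕ} {π π' : Finset (Finset ℕ)}

theorem insert_insert_ne_insert_pair (h : IsNCOn (Icc 1 n) π) :
    insert {n + 2} (insert {n + 1} π) ≠ insert {n + 1, n + 2} π' :=
  h.isMarriageableOn_insert_insert.1.1.ne_of_mem (by simp) (mem_insert_self _ _)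
    (mem_singleton_self (n + 1)) (by simp) (by simp [Finset.ext_iff])

theorem insert_insert_ne_enclose (h : IsNCOn (Icc 1 n) π) :
    insert {n + 2} (insert {n + 1} π) ≠ enclose n π' :=
  h.isMarriageableOn_insert_insert.1.1.ne_of_mem (mem_insert_self _ _) (mem_insert_self _ _)
    (mem_singleton_self (n + 2)) (by simp) (by simp [Finset.ext_iff])

theorem insert_insert_ne_stretch (h : IsNCOn (Icc 1 n) π) (h' : IsMarriageableOn (Icc 1 n) π') :
    insert {n + 2} (insert {n + 1} π) ≠ stretch n π' := by
  have := h'.two_le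
  obtain ⟨B, hB, hnB⟩ := (h'.1.1.2.2 n).1 (mem_Icc.2 ⟨by omega, le_rfl⟩)
  have hnB' : n ∈ (Icc 1 (n + 1)).filter (min · n ∈ B) := by simp [hnB]; omega
  refine h.isMarriageableOn_insert_insert.1.1.ne_of_mem (by simp)
    (mem_insert_of_mem (mem_image_of_mem _ hB)) (mem_singleton_self (n + 1)) (by simp [hnB]) ?_
  rintro hB'
  simp [← hB'] at hnB'

theorem insert_pair_ne_enclose (h : IsMarriageableOn (Icc 1 n) π) :
    insert {n + 1, n + 2} π ≠ enclose n π' := by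
  have := h.two_le
  refine h.insert_pair.1.1.ne_of_mem (mem_insert_self _ _) (mem_insert_self _ _) (x := n + 2)
    (by simp) (by simp) ?_
  rw [Ne, Finset.ext_iff, not_forall]
  exact ⟨1, by simp; omega⟩

theorem insert_pair_ne_stretch (h : IsMarriageableOn (Icc 1 n) π) :
    insert {n + 1, n + 2} π ≠ stretch n π' :=
  h.insert_pair.1.1.ne_of_mem (mem_insert_self _ _) (mem_insert_self _ _) (x := n + 2)
    (by simp) (by simp) (by simp [Finset.ext_iff])

theorem enclose_ne_stretch (h : IsMarriageableOn (Icc 1 n) π) : enclose n π ≠ stretch n π' :=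
  h.enclose.1.1.ne_of_mem (mem_insert_self _ _) (mem_insert_self _ _) (x := n + 2)
    (by simp) (by simp) (by simp [Finset.ext_iff])

end Disjointness

theorem cast_Cnum_eq_encard (n : ℕ) : (Cnum n : ℕ∞) = {π | IsNCOn (Icc 1 n) π}.encard :=
  ((finite_setOf_isPartitionOn _).subset fun _ h => h.1).cast_ncard_eq

theorem cast_Mnum_eq_encard (n : ℕ) :
    (Mnum n : ℕ∞) = {π | IsMarriageableOn (Icc 1 n) π}.encard := by
  simp only [Mnum, isMarriageable_iff]
  exact ((finite_setOf_isPartitionOn _).subset fun _ h => h.1.1).cast_ncard_eq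

theorem stmt7 (n : ℕ) : Cnum n + 3 * Mnum n ≤ Mnum (n + 2) := by
  set NC := {π | IsNCOn (Icc 1 n) π}
  set M := {π | IsMarriageableOn (Icc 1 n) π}
  set F0 := (fun π => insert {n + 2} (insert {n + 1} π)) '' NC
  set F1 := insert {n + 1, n + 2} '' M
  set F2 := enclose n '' M
  set F3 := stretch n '' M
  have hdisj : Disjoint (F0 ∪ F1 ∪ F2) F3 ∧ Disjoint (F0 ∪ F1) F2 ∧ Disjoint F0 F1 := by
    simp only [Set.disjoint_union_left]
    refine ⟨⟨⟨?_, ?_⟩, ?_⟩, ⟨?_, ?_⟩, ?_⟩ <;> refine Set.disjoint_image_image fun _ h _ h' => ?_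
    exacts [insert_insert_ne_stretch h h', insert_pair_ne_stretch h, enclose_ne_stretch h,
      insert_insert_ne_enclose h, insert_pair_ne_enclose h, insert_insert_ne_insert_pair h]
  have hF : F0 ∪ F1 ∪ F2 ∪ F3 ⊆ {σ | IsMarriageableOn (Icc 1 (n + 2)) σ} := by
    rintro σ (((⟨π, hπ, rfl⟩ | ⟨π, hπ, rfl⟩) | ⟨π, hπ, rfl⟩) | ⟨π, hπ, rfl⟩)
    exacts [hπ.isMarriageableOn_insert_insert, hπ.insert_pair, hπ.enclose, hπ.stretch]
  rw [← ENat.natCast_le_natCast, Nat.cast_add, Nat.cast_mul, cast_Cnum_eq_encard,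
    cast_Mnum_eq_encard, cast_Mnum_eq_encard]
  calc NC.encard + (3 : ℕ) * M.encard = F0.encard + F1.encard + F2.encard + F3.encard := by
        rw [(injOn_insert_insert.mono fun _ h => h.1).encard_image,
          (injOn_insert_pair.mono fun _ h => h.1.1).encard_image,
          (injOn_enclose.mono fun _ h => h.1.1).encard_image,
          (injOn_stretch.mono fun _ h => h.1.1).encard_image]
        ring
    _ = (F0 ∪ F1 ∪ F2 ∪ F3).encard := by
        rw [Set.encard_union_eq hdisj.1, Set.encard_union_eq hdisj.2.1,
          Set.encard_union_eq hdisj.2.2]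
    _ ≤ _ := Set.encard_le_encard hF
end
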